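/- arXiv:1212.1980 — 3 statements merged into one kernel-verified Lean document; each statement's English description precedes it below -/
import Mathlib

section
/- Let K be a field, let g be a finite-dimensional nilpotent Lie algebra over K, and let λ be a linear functional on g. Then λ admits a polarization: there exists a Lie subalgebra p of g such that λ(⁅x,y⁆) = 0 for all x, y ∈ p, and p is maximal among all K-linear subspaces W of g satisfying λ(⁅x,y⁆) = 0 for all x, y ∈ W. -/
/-
Induction on `dim L`. If `λ` vanishes on the nonzero central subspace `Z(L) ∩ ker λ`, pass to the
quotient by it: `λ` factors through the quotient and polarizations pull back along the quotient
map. Otherwise `λ` is injective on the center. If `L` is not abelian, nilpotency gives `u ∉ Z(L)`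
with `⁅L, u⁆ ⊆ Z(L)`; its `B_λ`-orthogonal `L₀` is then a proper subalgebra containing `u`, and `u`
lies in the radical of `B_λ` on `L₀`. Hence `u` belongs to every polarization `p` of `λ|L₀`, so
every isotropic subspace containing `p` lies in `L₀`, and `p` is a polarization of `λ`.
-/

open Module LieAlgebra

theorem LieModule.exists_lie_mem_maxTrivSubmodule {R L M : Type*} [CommRing R] [LieRing L]
    [LieAlgebra R L] [AddCommGroup M] [Module R M] [LieRingModule L M] [LieModule R L M]
    [LieModule.IsNilpotent L M] (h : maxTrivSubmodule R L M ≠ ⊤) :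
    ∃ m ∉ maxTrivSubmodule R L M, ∀ x : L, ⁅x, m⁆ ∈ maxTrivSubmodule R L M := by
  by_contra! hno
  have hnorm : (maxTrivSubmodule R L M).normalizer = maxTrivSubmodule R L M :=
    le_antisymm (fun m hm => by_contra fun hm' =>
      (hno m hm').elim fun x hx => hx ((LieSubmodule.mem_normalizer _ m).mp hm x))
      (LieSubmodule.le_normalizer _)
  obtain ⟨k, hk⟩ := (isNilpotent_iff_exists_ucs_eq_top R (L := L) (M := M)).mp inferInstance
  exact h (top_unique (hk ▸ LieSubmodule.ucs_le_of_normalizer_eq_self hnorm k))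

section

variable {K L : Type*} [Field K] [LieRing L] [LieAlgebra K L]

def IsIsotropic (lam : L →ₗ[K] K) (W : Submodule K L) : Prop :=
  ∀ x ∈ W, ∀ y ∈ W, lam ⁅x, y⁆ = 0

structure IsPolarization (lam : L →ₗ[K] K) (p : LieSubalgebra K L) : Prop where
  isIsotropic : IsIsotropic lam p.toSubmodule
  eq_of_le : ∀ W : Submodule K L, IsIsotropic lam W → p.toSubmodule ≤ W → W = p.toSubmodule

theorem isPolarization_top [IsLieAbelian L] (lam : L →ₗ[K] K) : IsPolarization lam ⊤ where
  isIsotropic x _ y _ := by rw [trivial_lie_zero, map_zero]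
  eq_of_le _ _ h := top_unique h

theorem IsPolarization.mem_of_forall_apply_lie_eq_zero {lam : L →ₗ[K] K} {p : LieSubalgebra K L}
    (hp : IsPolarization lam p) {u : L} (hu : ∀ x, lam ⁅u, x⁆ = 0) : u ∈ p := by
  have hiso : IsIsotropic lam (p.toSubmodule ⊔ K ∙ u) := by
    intro x hx y hy
    obtain ⟨a, ha, _, hb, rfl⟩ := Submodule.mem_sup.mp hx
    obtain ⟨a', ha', _, hb', rfl⟩ := Submodule.mem_sup.mp hy
    obtain ⟨c, rfl⟩ := Submodule.mem_span_singleton.mp hb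
    obtain ⟨c', rfl⟩ := Submodule.mem_span_singleton.mp hb'
    have hu' : ∀ x, lam ⁅x, u⁆ = 0 := fun x => by rw [← lie_skew, map_neg, hu, neg_zero]
    simp only [lie_add, add_lie, lie_smul, smul_lie, map_add, map_smul, hp.isIsotropic a ha a' ha',
      hu, hu', lie_self, smul_zero, add_zero]
  have hu_mem : u ∈ p.toSubmodule ⊔ K ∙ u :=
    Submodule.mem_sup_right (Submodule.mem_span_singleton_self u)
  rwa [hp.eq_of_le _ hiso le_sup_left] at hu_mem

theorem IsPolarization.comap {L' : Type*} [LieRing L'] [LieAlgebra K L'] {f : L →ₗ⁅K⁆ L'}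
    (hf : Function.Surjective f) {lam : L' →ₗ[K] K} {p : LieSubalgebra K L'}
    (hp : IsPolarization lam p) : IsPolarization (lam ∘ₗ f.toLinearMap) (p.comap f) where
  isIsotropic x hx y hy := by
    simpa using hp.isIsotropic _ hx _ hy
  eq_of_le W hW hpW := by
    have hWmap : W.map f.toLinearMap = p.toSubmodule := by
      refine hp.eq_of_le _ ?_ fun a ha => ?_
      · rintro _ ⟨x, hx, rfl⟩ _ ⟨y, hy, rfl⟩
        simpa using hW x hx y hy
      · obtain ⟨x, rfl⟩ := hf a
        exact ⟨x, hpW ha, rfl⟩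
    have hker : LinearMap.ker f.toLinearMap ≤ W := fun x hx =>
      hpW (show f x ∈ p by rw [show f x = 0 from hx]; exact p.zero_mem)
    calc W = (W.map f.toLinearMap).comap f.toLinearMap := by
          rw [Submodule.comap_map_eq, sup_eq_left.mpr hker]
      _ = (p.comap f).toSubmodule := by rw [hWmap]; rfl

theorem IsPolarization.map_incl {lam : L →ₗ[K] K} {S : LieSubalgebra K L} {u : L} (huS : u ∈ S)
    (hS : ∀ x, x ∈ S ↔ lam ⁅u, x⁆ = 0) {p : LieSubalgebra K S}
    (hp : IsPolarization (lam ∘ₗ S.incl.toLinearMap) p) : IsPolarization lam (p.map S.incl) where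
  isIsotropic := by
    rintro _ ⟨x, hx, rfl⟩ _ ⟨y, hy, rfl⟩
    exact hp.isIsotropic x hx y hy
  eq_of_le W hW hpW := by
    have hup : (⟨u, huS⟩ : S) ∈ p :=
      hp.mem_of_forall_apply_lie_eq_zero fun x => (hS x).mp x.2
    have hWS : W ≤ S.toSubmodule := fun w hw => (hS w).mpr (hW u (hpW ⟨_, hup, rfl⟩) w hw)
    have hWp : W.comap S.toSubmodule.subtype = p.toSubmodule :=
      hp.eq_of_le _ (fun x hx y hy => hW _ hx _ hy) fun x hx => hpW ⟨x, hx, rfl⟩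
    calc W = (W.comap S.toSubmodule.subtype).map S.toSubmodule.subtype := by
          rw [Submodule.map_comap_subtype, inf_eq_right.mpr hWS]
      _ = (p.map S.incl).toSubmodule := by rw [hWp]; rfl

def LieIdeal.ofLeCenter (N : Submodule K L) (hN : N ≤ (center K L).toSubmodule) : LieIdeal K L :=
  { N with lie_mem := fun {x _} hm => by rw [(hN hm) x]; exact N.zero_mem }

def LieIdeal.mkLieHom (I : LieIdeal K L) : L →ₗ⁅K⁆ L ⧸ I :=
  { (LieSubmodule.Quotient.mk' I).toLinearMap with map_lie' := rfl }

theorem LieIdeal.mkLieHom_surjective (I : LieIdeal K L) : Function.Surjective I.mkLieHom :=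
  Quot.mk_surjective

theorem LieIdeal.finrank_quotient_lt [FiniteDimensional K L] {I : LieIdeal K L} (hI : I ≠ ⊥) :
    finrank K (L ⧸ I) < finrank K L := by
  have hpos : finrank K I.toSubmodule ≠ 0 := fun h =>
    hI (LieSubmodule.toSubmodule_eq_bot _ |>.mp (Submodule.finrank_eq_zero.mp h))
  have := I.toSubmodule.finrank_quotient_add_finrank
  change finrank K (L ⧸ I.toSubmodule) < _
  omega

instance LieSubalgebra.isNilpotent [LieRing.IsNilpotent L] (S : LieSubalgebra K L) :
    LieRing.IsNilpotent S :=
  (show Function.Injective S.incl from Subtype.val_injective).lieAlgebra_isNilpotent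

instance LieIdeal.isNilpotent_quotient [LieRing.IsNilpotent L] (I : LieIdeal K L) :
    LieRing.IsNilpotent (L ⧸ I) :=
  I.mkLieHom_surjective.lieAlgebra_isNilpotent

-- `ad u` maps `L` into the center, so it kills `⁅L, L⁆` and this kernel is a subalgebra.
def LieSubalgebra.orthogonal (lam : L →ₗ[K] K) {u : L}
    (hu : ∀ x : L, ⁅x, u⁆ ∈ center K L) : LieSubalgebra K L :=
  { LinearMap.ker (lam ∘ₗ ad K L u) with
    lie_mem' := fun {x y} _ _ => by
      have hu' (z : L) : ∀ w : L, ⁅w, ⁅u, z⁆⁆ = 0 := by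
        rw [← LieModule.mem_maxTrivSubmodule K, ← lie_skew]; exact neg_mem (hu z)
      have : ⁅u, ⁅x, y⁆⁆ = 0 := by
        rw [leibniz_lie, ← lie_skew, hu' x, hu' y, neg_zero, add_zero]
      simp [this] }

theorem LieSubalgebra.mem_orthogonal {lam : L →ₗ[K] K} {u : L}
    (hu : ∀ x : L, ⁅x, u⁆ ∈ center K L) (x : L) : x ∈ orthogonal lam hu ↔ lam ⁅u, x⁆ = 0 := by
  simp [orthogonal]

theorem LieSubalgebra.finrank_orthogonal_lt [FiniteDimensional K L] {lam : L →ₗ[K] K}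
    (hlam : Disjoint (center K L).toSubmodule (LinearMap.ker lam)) {u : L}
    (hu : ∀ x : L, ⁅x, u⁆ ∈ center K L) (hu₀ : u ∉ center K L) :
    finrank K (orthogonal lam hu) < finrank K L := by
  refine Submodule.finrank_lt fun htop => ?_
  refine hu₀ ((LieModule.mem_maxTrivSubmodule K L L u).mpr fun x => ?_)
  have hux : ⁅u, x⁆ ∈ center K L := by rw [← lie_skew]; exact neg_mem (hu x)
  have hlam_ux : lam ⁅u, x⁆ = 0 :=
    (mem_orthogonal hu x).mp (show x ∈ (orthogonal lam hu).toSubmodule from htop ▸ trivial)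
  rw [← lie_skew, Submodule.disjoint_def.mp hlam _ hux hlam_ux, neg_zero]

end

/-- Any linear functional `λ` on a finite-dimensional nilpotent Lie algebra `g` over a field `K`
admits a polarization: a Lie subalgebra `p` that is isotropic for the form
`B_λ(x, y) = λ ⁅x, y⁆` and is maximal among all `K`-linear subspaces on which `B_λ` vanishes. -/
theorem exists_polarization
    (K : Type*) [Field K] (L : Type*) [LieRing L] [LieAlgebra K L]
    [FiniteDimensional K L] [LieRing.IsNilpotent L]
    (lam : L →ₗ[K] K) :
    ∃ p : LieSubalgebra K L,
      (∀ x ∈ p, ∀ y ∈ p, lam ⁅x, y⁆ = 0) ∧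
      (∀ W : Submodule K L, (∀ x ∈ W, ∀ y ∈ W, lam ⁅x, y⁆ = 0) →
        p.toSubmodule ≤ W → W = p.toSubmodule) := by
  suffices ∃ p, IsPolarization lam p from this.imp fun _ hp => ⟨hp.isIsotropic, hp.eq_of_le⟩
  induction hn : finrank K L using Nat.strong_induction_on generalizing L with
  | _ n ih =>
  subst hn
  by_cases hab : IsLieAbelian L
  · exact ⟨⊤, isPolarization_top lam⟩
  by_cases hlam : Disjoint (center K L).toSubmodule (LinearMap.ker lam)
  · obtain ⟨u, hu₀, hu⟩ := LieModule.exists_lie_mem_maxTrivSubmodule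
      (mt (isLieAbelian_iff_center_eq_top K L).mpr hab)
    let S := LieSubalgebra.orthogonal lam hu
    obtain ⟨p, hp⟩ := ih _ (LieSubalgebra.finrank_orthogonal_lt hlam hu hu₀) S
      (lam ∘ₗ S.incl.toLinearMap) rfl
    have huS : u ∈ S := (LieSubalgebra.mem_orthogonal hu u).mpr (by rw [lie_self, map_zero])
    exact ⟨_, hp.map_incl huS (LieSubalgebra.mem_orthogonal hu)⟩
  · let I := LieIdeal.ofLeCenter _ (inf_le_left (b := LinearMap.ker lam))
    have hI : I ≠ ⊥ := fun h =>
      hlam (disjoint_iff.mpr ((LieSubmodule.toSubmodule_eq_bot _).mpr h))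
    obtain ⟨p, hp⟩ := ih _ (LieIdeal.finrank_quotient_lt hI) (L ⧸ I)
      (I.toSubmodule.liftQ lam inf_le_right) rfl
    exact ⟨_, hp.comap I.mkLieHom_surjective⟩
end

section
/- Let g be a finite-dimensional nilpotent Lie algebra over a field K and h any Lie subalgebra of g. Then there exists a finite chain of Lie subalgebras g = g₀ ⊇ g₁ ⊇ … ⊇ g_k = h such that for each i, g_{i+1} is a Lie ideal of g_i of codimension one (dim g_{i+1} = dim g_i − 1). -/
/-!
In a nilpotent Lie algebra every proper subalgebra `H` is strictly contained in its normalizer: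
otherwise an induction along the upper central series, each of whose terms is the normalizer of
the previous one, would trap the whole algebra inside `H`. Adjoining to `H` one element of the
normalizer outside `H` gives a subalgebra in which `H` is an ideal of codimension one, and since
subalgebras of a finite-dimensional algebra satisfy the ascending chain condition, iterating
this step reaches the whole algebra.
-/

open Module

namespace LieSubalgebra

section CommRing

variable {R L : Type*} [CommRing R] [LieRing L] [LieAlgebra R L]

theorem lt_normalizer_of_ne_top [LieRing.IsNilpotent L] {H : LieSubalgebra R L} (hH : H ≠ ⊤) :
    H < H.normalizer := by
  refine H.le_normalizer.lt_of_ne fun hself => hH ?_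
  have ucs_le : ∀ k, ∀ x ∈ (⊥ : LieIdeal R L).ucs k, x ∈ H := by
    intro k
    induction k with
    | zero => simp
    | succ k ih =>
      intro x hx
      rw [LieSubmodule.ucs_succ, LieSubmodule.mem_normalizer] at hx
      rw [hself, mem_normalizer_iff']
      exact fun y _ => ih _ (hx y)
  obtain ⟨k, hk⟩ :=
    (LieModule.isNilpotent_iff_exists_ucs_eq_top R (L := L) (M := L)).mp inferInstance
  exact eq_top_iff.mpr fun x _ => ucs_le k x (hk ▸ LieSubmodule.mem_top x)

def supSpanSingleton (H : LieSubalgebra R L) {x : L} (hx : x ∈ H.normalizer) :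
    LieSubalgebra R L :=
  { (R ∙ x) ⊔ (H : Submodule R L) with
    lie_mem' := lie_mem_sup_of_mem_normalizer hx }

variable {H : LieSubalgebra R L} {x : L} (hx : x ∈ H.normalizer)

theorem toSubmodule_supSpanSingleton :
    (H.supSpanSingleton hx : Submodule R L) = (R ∙ x) ⊔ (H : Submodule R L) :=
  rfl

theorem le_supSpanSingleton : H ≤ H.supSpanSingleton hx :=
  fun _ hy => Submodule.mem_sup_right hy

theorem lt_supSpanSingleton (hxH : x ∉ H) : H < H.supSpanSingleton hx :=
  (le_supSpanSingleton hx).lt_of_ne fun h =>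
    hxH (h ▸ Submodule.mem_sup_left (Submodule.mem_span_singleton_self x))

theorem supSpanSingleton_le_normalizer : H.supSpanSingleton hx ≤ H.normalizer := by
  rw [← toSubmodule_le_toSubmodule, toSubmodule_supSpanSingleton]
  exact sup_le ((Submodule.span_singleton_le_iff_mem _ _).mpr hx) H.le_normalizer

end CommRing

theorem finrank_supSpanSingleton {K L : Type*} [Field K] [LieRing L] [LieAlgebra K L]
    [FiniteDimensional K L] {H : LieSubalgebra K L} {x : L} (hx : x ∈ H.normalizer)
    (hxH : x ∉ H) : finrank K (H.supSpanSingleton hx) = finrank K H + 1 := by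
  change finrank K (H.supSpanSingleton hx : Submodule K L) = finrank K (H : Submodule K L) + 1
  rw [toSubmodule_supSpanSingleton, sup_comm]
  exact Submodule.finrank_sup_span_singleton hxH

end LieSubalgebra

section Chain

variable {K L : Type*} [Field K] [LieRing L] [LieAlgebra K L]

def IsCodimOneIdealChain {k : ℕ} (c : Fin (k + 1) → LieSubalgebra K L) : Prop :=
  ∀ i : Fin k,
    c i.succ ≤ c i.castSucc ∧
    (∀ x ∈ c i.castSucc, ∀ y ∈ c i.succ, ⁅x, y⁆ ∈ c i.succ) ∧
    finrank K (c i.succ) + 1 = finrank K (c i.castSucc)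

theorem isCodimOneIdealChain_const (H : LieSubalgebra K L) :
    IsCodimOneIdealChain (fun _ : Fin 1 => H) :=
  fun i => i.elim0

theorem IsCodimOneIdealChain.snoc {k : ℕ} {c : Fin (k + 1) → LieSubalgebra K L}
    (hc : IsCodimOneIdealChain c) {H : LieSubalgebra K L} (hle : H ≤ c (Fin.last k))
    (hideal : ∀ x ∈ c (Fin.last k), ∀ y ∈ H, ⁅x, y⁆ ∈ H)
    (hrank : finrank K H + 1 = finrank K (c (Fin.last k))) :
    IsCodimOneIdealChain (Fin.snoc c H : Fin (k + 2) → LieSubalgebra K L) := by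
  intro i
  induction i using Fin.lastCases with
  | last =>
    rw [Fin.succ_last, Fin.snoc_last, Fin.snoc_castSucc]
    exact ⟨hle, hideal, hrank⟩
  | cast j =>
    rw [Fin.succ_castSucc, Fin.snoc_castSucc, Fin.snoc_castSucc]
    exact hc j

theorem exists_isCodimOneIdealChain [FiniteDimensional K L] [LieRing.IsNilpotent L]
    (H : LieSubalgebra K L) :
    ∃ (k : ℕ) (c : Fin (k + 1) → LieSubalgebra K L),
      c 0 = ⊤ ∧ c (Fin.last k) = H ∧ IsCodimOneIdealChain c := by
  induction H using WellFoundedGT.induction with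
  | _ H ih =>
    by_cases hH : H = ⊤
    · exact ⟨0, fun _ => H, hH, rfl, isCodimOneIdealChain_const H⟩
    obtain ⟨x, hx, hxH⟩ := SetLike.exists_of_lt (LieSubalgebra.lt_normalizer_of_ne_top hH)
    have hlt := LieSubalgebra.lt_supSpanSingleton hx hxH
    obtain ⟨k, c, hc0, hcH, hc⟩ := ih _ hlt
    refine ⟨k + 1, Fin.snoc c H, ?_, Fin.snoc_last .., ?_⟩
    · rw [← Fin.castSucc_zero, Fin.snoc_castSucc, hc0]
    refine hc.snoc (hcH ▸ hlt.le) (hcH ▸ fun y hy z hz => ?_) ?_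
    · exact LieSubalgebra.ideal_in_normalizer
        (LieSubalgebra.supSpanSingleton_le_normalizer hx hy) hz
    · rw [hcH, LieSubalgebra.finrank_supSpanSingleton hx hxH]

end Chain

/-- For any Lie subalgebra `h` of a finite-dimensional nilpotent Lie algebra `g` there is a
chain of Lie subalgebras `g = g₀ ⊇ g₁ ⊇ … ⊇ g_k = h` in which each term is an ideal of
codimension one in the preceding one. -/
theorem exists_chain_of_codim_one_ideals
    (K : Type*) [Field K] (L : Type*) [LieRing L] [LieAlgebra K L]
    [FiniteDimensional K L] [LieRing.IsNilpotent L]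
    (h : LieSubalgebra K L) :
    ∃ (k : ℕ) (c : Fin (k + 1) → LieSubalgebra K L),
      c 0 = ⊤ ∧ c (Fin.last k) = h ∧
      ∀ i : Fin k,
        c i.succ ≤ c i.castSucc ∧
        (∀ x ∈ c i.castSucc, ∀ y ∈ c i.succ, ⁅x, y⁆ ∈ c i.succ) ∧
        Module.finrank K (c i.succ) + 1 = Module.finrank K (c i.castSucc) :=
  exists_isCodimOneIdealChain h
end

section
/- Let K be a field, V a finite-dimensional K-vector space, and B an alternating bilinear form on V. Let V₀ ⊆ V be a subspace of codimension one such that the radical of B, namely {v ∈ V : B(v, w) = 0 for all w ∈ V}, is contained in V₀. Then there exist elements u ∈ V \ V₀ and v ∈ V₀ with B(v, w) = 0 for all w ∈ V₀ (i.e. v lies in the radical of the restriction of B to V₀) such that B(u, v) = 1. -/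
/-!
Write `V₀⊥` for the orthogonal of `V₀` with respect to `B`. Since `ker B ≤ V₀` and `V₀` is a
hyperplane, the dimension formula `dim V₀ + dim V₀⊥ = dim V + dim (V₀ ⊓ ker B)` gives
`dim V₀⊥ = dim ker B + 1`, so some `v ∈ V₀⊥` is not in `ker B`. Such a `v` lies in `V₀`: otherwise
`B v` would vanish on `V₀` and (as `B` is alternating) on `v`, hence on `V₀ ⊔ K v = V`. For the
same reason `B v u ≠ 0` for every `u ∉ V₀`, and rescaling `v` gives `B u v = 1`.
-/

open Module

section

variable {K V M : Type*} [Field K] [AddCommGroup V] [Module K V] [FiniteDimensional K V]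

theorem Submodule.sup_span_singleton_eq_top_of_finrank_add_one {W : Submodule K V} {x : V}
    (hW : finrank K W + 1 = finrank K V) (hx : x ∉ W) : W ⊔ K ∙ x = ⊤ := by
  apply Submodule.eq_top_of_finrank_eq
  have hlt : W < W ⊔ K ∙ x :=
    lt_of_le_of_ne le_sup_left fun h ↦
      hx (h ▸ Submodule.mem_sup_right (Submodule.mem_span_singleton_self x))
  have := Submodule.finrank_lt_finrank_of_lt hlt
  have := Submodule.finrank_le (W ⊔ K ∙ x)
  omega

theorem LinearMap.eq_zero_of_le_ker_of_finrank_add_one [AddCommGroup M] [Module K M]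
    {W : Submodule K V} {x : V} {f : V →ₗ[K] M} (hW : finrank K W + 1 = finrank K V)
    (hx : x ∉ W) (hWf : W ≤ ker f) (hxf : f x = 0) : f = 0 := by
  rw [← ker_eq_top, eq_top_iff,
    ← Submodule.sup_span_singleton_eq_top_of_finrank_add_one hW hx]
  exact sup_le hWf ((Submodule.span_singleton_le_iff_mem x _).mpr hxf)

namespace LinearMap.BilinForm

variable {B : LinearMap.BilinForm K V} {W : Submodule K V}

theorem finrank_orthogonal_of_ker_le (hker : ker B ≤ W) (hW : finrank K W + 1 = finrank K V) :
    finrank K (B.orthogonal W) = finrank K (ker B) + 1 := by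
  have := finrank_add_finrank_orthogonal' (B := B) W
  rw [inf_eq_right.mpr hker] at this
  omega

theorem exists_mem_orthogonal_notMem_ker (hker : ker B ≤ W)
    (hW : finrank K W + 1 = finrank K V) : ∃ v ∈ B.orthogonal W, v ∉ ker B := by
  by_contra! h
  have := Submodule.finrank_mono (show B.orthogonal W ≤ ker B from h)
  rw [finrank_orthogonal_of_ker_le hker hW] at this
  omega

theorem IsAlt.apply_ne_zero_of_mem_orthogonal (hB : B.IsAlt)
    (hW : finrank K W + 1 = finrank K V) {u v : V} (hu : u ∉ W) (hv : v ∈ B.orthogonal W)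
    (hvker : v ∉ ker B) : B v u ≠ 0 := fun hvu ↦
  hvker <| LinearMap.eq_zero_of_le_ker_of_finrank_add_one hW hu
    (fun w hw ↦ hB.isRefl.eq_zero (hv w hw)) hvu

theorem IsAlt.orthogonal_le_of_ker_le (hB : B.IsAlt) (hker : ker B ≤ W)
    (hW : finrank K W + 1 = finrank K V) : B.orthogonal W ≤ W := by
  intro v hv
  by_contra hvW
  exact hB.apply_ne_zero_of_mem_orthogonal hW hvW hv (fun h ↦ hvW (hker h)) (hB v)

end LinearMap.BilinForm

end

/-- Let `B` be an alternating bilinear form on a finite-dimensional vector space `V` and let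
`V₀ ⊆ V` be a hyperplane containing the radical of `B`. Then there exist `u ∈ V \ V₀` and `v`
in the radical of the restriction of `B` to `V₀` with `B u v = 1`. -/
theorem exists_pair_hyperplane_radical
    (K : Type*) [Field K] (V : Type*) [AddCommGroup V] [Module K V]
    [FiniteDimensional K V]
    (B : V →ₗ[K] V →ₗ[K] K) (halt : ∀ x : V, B x x = 0)
    (V0 : Submodule K V)
    (hcodim : Module.finrank K V0 + 1 = Module.finrank K V)
    (hrad : ∀ v : V, (∀ w : V, B v w = 0) → v ∈ V0) :
    ∃ u v : V, u ∉ V0 ∧ v ∈ V0 ∧ (∀ w ∈ V0, B v w = 0) ∧ B u v = 1 := by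
  have hB : LinearMap.BilinForm.IsAlt B := halt
  have hker : LinearMap.ker B ≤ V0 := fun v hv ↦ hrad v fun w ↦ by simp [LinearMap.mem_ker.mp hv]
  obtain ⟨u, -, hu⟩ : ∃ u ∈ (⊤ : Submodule K V), u ∉ V0 := by
    refine SetLike.exists_of_lt (lt_top_iff_ne_top.mpr fun h ↦ ?_)
    rw [h, finrank_top] at hcodim
    omega
  obtain ⟨v, hv, hvker⟩ := LinearMap.BilinForm.exists_mem_orthogonal_notMem_ker hker hcodim
  have huv : B u v ≠ 0 := by
    rw [← hB.neg_eq, neg_ne_zero]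
    exact hB.apply_ne_zero_of_mem_orthogonal hcodim hu hv hvker
  refine ⟨u, (B u v)⁻¹ • v, hu, V0.smul_mem _ (hB.orthogonal_le_of_ker_le hker hcodim hv),
    fun w hw ↦ ?_, ?_⟩
  · rw [map_smul, LinearMap.smul_apply, hB.isRefl.eq_zero (hv w hw), smul_zero]
  · rw [map_smul, smul_eq_mul, inv_mul_cancel₀ huv]
end
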